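/- For the 2-way ε-filter on the grid with moves a=(1,0), b=(0,1), c=(1,1): a word over {a,b,c,x} (where x also denotes the move (1,1) but resets the filter) is accepted by the filter automaton M if and only if between any two consecutive occurrences of x (and before the first and after the last x), the block of letters from {a,b,c} avoids the factors ab, ba, ac, bc; consequently M allows a unique ε-path between any two composition states connected in the grid. -/

import Mathlib

/-- The 4-letter alphabet {a, b, c, x}. -/
inductive Ltr | a | b | c | x
deriving DecidableEq

/-- The forbidden two-letter factors: ab, ba, ac, bc. -/
def forb : List (List Ltr) := [[.a, .b], [.b, .a], [.a, .c], [.b, .c]]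

/-- `w` avoids all of ab, ba, ac, bc as factors. -/
def Avoids (w : List Ltr) : Prop := ∀ f ∈ forb, ¬ f <:+: w

/-- Moves on the 2-dimensional grid: a = (1,0), b = (0,1), c = (1,1), x = (1,1). -/
def mv : Ltr → ℕ × ℕ
  | .a => (1, 0)
  | .b => (0, 1)
  | .c => (1, 1)
  | .x => (1, 1)

/-- Total displacement of a word. -/
def disp (w : List Ltr) : ℕ × ℕ := (w.map mv).sum

/-- `w` is a word over {a,b,c} whose moves go from `(p,q)` to `(r,s)`. -/
def Connects (p q r s : ℕ) (w : List Ltr) : Prop :=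
  Ltr.x ∉ w ∧ p + (disp w).1 = r ∧ q + (disp w).2 = s

/-- The transition function of the 2-way ε-filter M, completed with a dead
state `none`. States 0, 1, 2 are `some 0`, `some 1`, `some 2`. With
a = (ε1:ε1), b = (ε2:ε2), c = (ε2:ε1), x = (x:x):
from 0: x→0, a→1, b→2, c→0; from 1: a→1, x→0; from 2: b→2, x→0. -/
def filtStep (q : Option (Fin 3)) (l : Ltr) : Option (Fin 3) :=
  match q with
  | none => none
  | some q =>
    if q = 0 then
      match l with
      | .a => some 1
      | .b => some 2
      | .c => some 0
      | .x => some 0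
    else if q = 1 then
      match l with
      | .a => some 1
      | .x => some 0
      | _ => none
    else
      match l with
      | .b => some 2
      | .x => some 0
      | _ => none

/-- The 2-way ε-filter automaton M: initial state 0, all (non-dead) states
final. -/
def filtM : DFA Ltr (Option (Fin 3)) :=
  ⟨filtStep, some 0, {q | q ≠ none}⟩

/-!
Avoiding ab, ba, ac, bc is a condition on neighbouring letters only, i.e. being a chain for the
relation `Allowed`, and `x` is allowed next to every letter, so a word is such a chain iff each of
its `x`-free blocks is. The filter checks exactly this: after an allowed prefix its state records
whether the last letter was `a` (state 1), `b` (state 2) or neither (state 0), and it dies on a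
forbidden pair. An `x`-free allowed word has the shape `c^k a^m` or `c^k b^m`, so it is determined
by its displacement.
-/

namespace List

variable {α : Type*} {R : α → α → Prop}

theorem isChain_iff_forall_infix_pair {l : List α} :
    l.IsChain R ↔ ∀ a b, [a, b] <:+: l → R a b := by
  rw [isChain_iff_forall_rel_of_append_cons_cons]
  constructor
  · rintro h a b ⟨s, t, rfl⟩
    exact h (l₁ := s) (l₂ := t) (by simp)
  · rintro h a b s t rfl
    exact h a b ⟨s, t, by simp⟩

theorem isChain_intercalate_singleton_iff {sep : α} (hl : ∀ a, R a sep) (hr : ∀ a, R sep a)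
    (ls : List (List α)) : ([sep].intercalate ls).IsChain R ↔ ∀ b ∈ ls, b.IsChain R := by
  induction ls with
  | nil => simp
  | cons l ls ih =>
    cases ls with
    | nil => simp
    | cons l' ls =>
      rw [intercalate_cons_cons, append_assoc, singleton_append, isChain_append, isChain_cons,
        forall_mem_cons, ← ih]
      simp [hl, hr]

theorem isChain_iff_forall_mem_splitOn [BEq α] [LawfulBEq α] {sep : α} (hl : ∀ a, R a sep)
    (hr : ∀ a, R sep a) (l : List α) : l.IsChain R ↔ ∀ b ∈ l.splitOn sep, b.IsChain R := by
  conv_lhs => rw [← intercalate_splitOn (xs := l) sep]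
  exact isChain_intercalate_singleton_iff hl hr _

end List

def Allowed (l l' : Ltr) : Prop := [l, l'] ∉ forb

instance : DecidableRel Allowed := fun l l' => inferInstanceAs (Decidable ([l, l'] ∉ forb))

theorem avoids_iff_isChain {w : List Ltr} : Avoids w ↔ w.IsChain Allowed := by
  rw [List.isChain_iff_forall_infix_pair]
  refine ⟨fun h l l' hw hf => h _ hf hw, fun h f hf hfw => ?_⟩
  obtain ⟨l, l', rfl⟩ : ∃ l l', f = [l, l'] := by
    simp only [forb, List.mem_cons, List.not_mem_nil, or_false] at hf
    rcases hf with rfl | rfl | rfl | rfl <;> exact ⟨_, _, rfl⟩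
  exact h l l' hfw hf

/-- The state of `M` after reading an accepted word, as a function of its last letter. -/
def stateOfLast : Option Ltr → Option (Fin 3)
  | some .a => some 1
  | some .b => some 2
  | _ => some 0

theorem filtStep_stateOfLast (o : Option Ltr) (l : Ltr) :
    filtStep (stateOfLast o) l =
      if ∀ p ∈ o, Allowed p l then stateOfLast (some l) else none := by
  rcases o with _ | p
  · cases l <;> rfl
  · cases p <;> cases l <;> decide

theorem filtM_eval (w : List Ltr) :
    filtM.eval w = if w.IsChain Allowed then stateOfLast w.getLast? else none := by
  induction w using List.reverseRecOn with
  | nil => rfl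
  | append_singleton w l ih =>
    rw [DFA.eval_append_singleton, ih]
    by_cases hw : w.IsChain Allowed
    · simp only [List.isChain_append, hw, List.isChain_singleton, List.head?_cons,
        Option.mem_def, Option.some.injEq, forall_eq', true_and, List.getLast?_concat]
      exact filtStep_stateOfLast _ _
    · rw [if_neg hw, if_neg fun h => hw (h.prefix (List.prefix_append w [l]))]
      rfl

theorem mem_filtM_accepts_iff {w : List Ltr} : w ∈ filtM.accepts ↔ w.IsChain Allowed := by
  rw [DFA.mem_accepts, filtM_eval]
  split_ifs with hw
  · refine iff_of_true ?_ hw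
    rcases w.getLast? with _ | (_ | _ | _ | _) <;> simp [filtM, stateOfLast]
  · exact iff_of_false (by simp [filtM]) hw

theorem mem_filtM_accepts_iff_forall_splitOn {w : List Ltr} :
    w ∈ filtM.accepts ↔ ∀ b ∈ w.splitOn Ltr.x, Avoids b := by
  simp only [mem_filtM_accepts_iff, avoids_iff_isChain]
  exact List.isChain_iff_forall_mem_splitOn (fun l => by cases l <;> decide)
    (fun l => by cases l <;> decide) w

/-- The word `c^min(d,e) a^(d-e) b^(e-d)`. -/
def gridWord : ℕ → ℕ → List Ltr
  | 0, e => List.replicate e .b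
  | d + 1, 0 => List.replicate (d + 1) .a
  | d + 1, e + 1 => .c :: gridWord d e

theorem disp_cons (l : Ltr) (w : List Ltr) : disp (l :: w) = disp w + mv l := by
  simp [disp, add_comm]

theorem disp_replicate (n : ℕ) (l : Ltr) : disp (List.replicate n l) = n • mv l := by
  simp [disp, List.map_replicate, List.sum_replicate]

theorem disp_gridWord (d e : ℕ) : disp (gridWord d e) = (d, e) := by
  fun_induction gridWord d e with
  | case1 e | case2 d => simp [disp_replicate, mv]
  | case3 d e ih => rw [disp_cons, ih]; rfl

theorem x_notMem_gridWord (d e : ℕ) : Ltr.x ∉ gridWord d e := by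
  fun_induction gridWord d e <;> simp [List.mem_replicate, *]

theorem isChain_gridWord (d e : ℕ) : (gridWord d e).IsChain Allowed := by
  fun_induction gridWord d e with
  | case1 e | case2 d => exact List.isChain_replicate_of_rel _ (by decide)
  | case3 d e ih => exact List.isChain_cons.2 ⟨fun l _ => by cases l <;> decide, ih⟩

theorem eq_gridWord_disp {w : List Ltr} (hw : w.IsChain Allowed) (hx : Ltr.x ∉ w) :
    w = gridWord (disp w).1 (disp w).2 := by
  induction w with
  | nil => rfl
  | cons l t ih =>
    rw [List.mem_cons, not_or] at hx
    obtain ⟨d, e, rfl⟩ : ∃ d e, t = gridWord d e := ⟨_, _, ih hw.tail hx.2⟩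
    rw [disp_cons, disp_gridWord]
    cases l with
    | c => rfl
    | x => exact absurd rfl hx.1
    | a | b =>
      clear ih hx
      rcases d with _ | d <;> rcases e with _ | e <;>
        simp_all [gridWord, mv, Allowed, forb, List.replicate_succ]

theorem existsUnique_connects_avoids {p q r s : ℕ} (hp : p ≤ r) (hq : q ≤ s) :
    ∃! w : List Ltr, Connects p q r s w ∧ Avoids w := by
  refine ⟨gridWord (r - p) (s - q), ⟨⟨x_notMem_gridWord _ _, ?_⟩,
    avoids_iff_isChain.2 (isChain_gridWord _ _)⟩, ?_⟩
  · simp only [disp_gridWord]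
    omega
  · rintro w ⟨⟨hx, hr, hs⟩, hw⟩
    rw [eq_gridWord_disp (avoids_iff_isChain.1 hw) hx]
    congr 1 <;> omega

/-- A word over {a,b,c,x} is accepted by the filter M iff every block between
consecutive occurrences of x (and before the first and after the last x)
avoids the factors ab, ba, ac, bc; consequently M allows a unique ε-path
between any two composition states connected in the grid. -/
theorem filter_blockwise_and_unique_path :
    (∀ w : List Ltr, w ∈ filtM.accepts ↔
      ∀ b ∈ w.splitOn Ltr.x, Avoids b) ∧
    (∀ p q r s : ℕ, p ≤ r → q ≤ s →
      ∃! w : List Ltr, Connects p q r s w ∧ Avoids w) :=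
  ⟨fun _ => mem_filtM_accepts_iff_forall_splitOn,
    fun _ _ _ _ => existsUnique_connects_avoids⟩
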